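/- arXiv:2109.06541 — 8 statements merged into one kernel-verified Lean document; each statement's English description precedes it below -/
import Mathlib

section
/- For all positive integers n and k with k ≤ n, \(\overline{M}_k(n) = \sum_{d\mid n} \varphi(d) \sum_{\substack{\delta \mid n\\ \gcd(\delta,d)=1}} \mu(\delta) \sum_{\substack{j=1\\ \delta j \equiv 1 \ (\mathrm{mod}\ d)}}^{n/\delta} f_k\left(\left\lfloor \frac{n}{j\delta}\right\rfloor\right)\), where \(\varphi\) is Euler's totient function and \(\mu\) is the Möbius function. -/
open Finset ArithmeticFunction

/-- `fk k m` is the number of `k`-element subsets `A` of `{1, 2, ..., m}` whose elements are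
relatively prime, i.e. the gcd of the elements of `A` is `1`. -/
def fk (k m : ℕ) : ℕ :=
  ((Finset.Icc 1 m).powerset.filter (fun A => A.card = k ∧ A.gcd _root_.id = 1)).card

/-- `MbarK k n = ∑ ((A) - 1, n)`, summed over all `k`-element subsets `A` of `{1, 2, ..., n}`
such that the gcd `(A)` of the elements of `A` is relatively prime to `n`. -/
def MbarK (k n : ℕ) : ℕ :=
  ∑ A ∈ (Finset.Icc 1 n).powerset.filter
      (fun A => A.card = k ∧ Nat.gcd (A.gcd _root_.id) n = 1),
    Nat.gcd (A.gcd _root_.id - 1) n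

/-! ### Auxiliary lemmas -/

lemma gcd_eq_sum_totient' (m n : ℕ) (hn : 0 < n) :
    Nat.gcd m n = ∑ d ∈ n.divisors.filter (· ∣ m), Nat.totient d := by
  conv_lhs => rw [← Nat.sum_totient (Nat.gcd m n)]
  congr 1
  ext d
  simp only [Nat.mem_divisors, Finset.mem_filter, Nat.dvd_gcd_iff]
  constructor
  · rintro ⟨⟨h1, h2⟩, -⟩; exact ⟨⟨h2, hn.ne'⟩, h1⟩
  · rintro ⟨⟨h2, -⟩, h1⟩; exact ⟨⟨h1, h2⟩, Nat.gcd_ne_zero_right hn.ne'⟩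

lemma moebius_ind (g n : ℕ) (hn : 0 < n) :
    (if Nat.gcd g n = 1 then (1:ℤ) else 0) = ∑ δ ∈ n.divisors.filter (· ∣ g), moebius δ := by
  have h := moebius_mul_coe_zeta
  have h2 : (((moebius : ArithmeticFunction ℤ) * (zeta : ArithmeticFunction ℤ) : ArithmeticFunction ℤ)) (Nat.gcd g n)
      = (1 : ArithmeticFunction ℤ) (Nat.gcd g n) := by rw [h]
  rw [coe_mul_zeta_apply, one_apply] at h2
  rw [← h2]
  congr 1
  ext d
  simp only [Nat.mem_divisors, Finset.mem_filter, Nat.dvd_gcd_iff]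
  constructor
  · rintro ⟨⟨h1, h2⟩, -⟩; exact ⟨⟨h2, hn.ne'⟩, h1⟩
  · rintro ⟨⟨h2, -⟩, h1⟩; exact ⟨⟨h1, h2⟩, Nat.gcd_ne_zero_right hn.ne'⟩

lemma card_gcd_eq (n k g : ℕ) (hg : 0 < g) :
    ((Finset.Icc 1 n).powerset.filter (fun A => A.card = k ∧ A.gcd _root_.id = g)).card
      = fk k (n / g) := by
  rw [fk]
  refine Finset.card_bij' (fun A _ => A.image (· / g)) (fun B _ => B.image (g * ·))
    ?hi ?hj ?li ?ri
  case hi =>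
    rintro A hA
    simp only [Finset.mem_filter, Finset.mem_powerset] at hA ⊢
    obtain ⟨hsub, hcard, hgcd⟩ := hA
    have hdvd : ∀ a ∈ A, g ∣ a := fun a ha => hgcd ▸ Finset.gcd_dvd ha
    have hmem : ∀ a ∈ A, 1 ≤ a ∧ a ≤ n := by
      intro a ha; simpa using hsub ha
    refine ⟨?_, ?_, ?_⟩
    · intro b hb
      simp only [Finset.mem_image] at hb
      obtain ⟨a, ha, rfl⟩ := hb
      simp only [Finset.mem_Icc]
      exact ⟨(Nat.one_le_div_iff hg).2 (Nat.le_of_dvd (hmem a ha).1 (hdvd a ha)),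
        Nat.div_le_div_right (hmem a ha).2⟩
    · rw [Finset.card_image_of_injOn, hcard]
      intro a ha b hb hab
      have hab' : a / g = b / g := hab
      rw [← Nat.div_mul_cancel (hdvd a ha), ← Nat.div_mul_cancel (hdvd b hb), hab']
    · have h1 : (A.image (· / g)).gcd _root_.id = A.gcd (· / g) := Finset.gcd_image A
      rw [h1]
      have h3 : (A.gcd fun x => g * (x / g)) = normalize g * A.gcd (fun x => x / g) :=
        Finset.gcd_mul_left
      rw [normalize_eq] at h3
      have h2 : g * A.gcd (fun x => x / g) = g * 1 := by
        rw [← h3, mul_one]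
        calc (A.gcd fun x => g * (x / g)) = A.gcd _root_.id := by
              apply Finset.gcd_congr rfl
              intro a ha
              exact Nat.mul_div_cancel' (hdvd a ha)
          _ = g := hgcd
      exact Nat.eq_of_mul_eq_mul_left hg h2
  case hj =>
    rintro B hB
    simp only [Finset.mem_filter, Finset.mem_powerset] at hB ⊢
    obtain ⟨hsub, hcard, hgcd⟩ := hB
    have hmem : ∀ b ∈ B, 1 ≤ b ∧ b ≤ n / g := by
      intro b hb; simpa using hsub hb
    refine ⟨?_, ?_, ?_⟩
    · intro a ha
      simp only [Finset.mem_image] at ha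
      obtain ⟨b, hb, rfl⟩ := ha
      simp only [Finset.mem_Icc]
      refine ⟨Nat.mul_pos hg (hmem b hb).1, ?_⟩
      calc g * b ≤ g * (n / g) := Nat.mul_le_mul_left g (hmem b hb).2
        _ ≤ n := Nat.mul_div_le n g
    · rw [Finset.card_image_of_injOn, hcard]
      intro a _ b _ hab
      exact Nat.eq_of_mul_eq_mul_left hg hab
    · have h1 : (B.image (g * ·)).gcd _root_.id = B.gcd (g * ·) := Finset.gcd_image B
      rw [h1]
      have h3 : (B.gcd fun x => g * x) = normalize g * B.gcd _root_.id := Finset.gcd_mul_left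
      rw [normalize_eq] at h3
      rw [show (B.gcd (g * ·)) = (B.gcd fun x => g * x) from rfl, h3, hgcd, mul_one]
  case li =>
    rintro A hA
    simp only [Finset.mem_filter, Finset.mem_powerset] at hA
    obtain ⟨hsub, hcard, hgcd⟩ := hA
    have hdvd : ∀ a ∈ A, g ∣ a := fun a ha => hgcd ▸ Finset.gcd_dvd ha
    show Finset.image (fun x => g * x) (Finset.image (fun x => x / g) A) = A
    rw [Finset.image_image]
    conv_rhs => rw [← Finset.image_id (s := A)]
    apply Finset.image_congr
    intro a ha
    exact Nat.mul_div_cancel' (hdvd a ha)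
  case ri =>
    rintro B hB
    show Finset.image (fun x => x / g) (Finset.image (fun x => g * x) B) = B
    rw [Finset.image_image]
    conv_rhs => rw [← Finset.image_id (s := B)]
    apply Finset.image_congr
    intro b hb
    simp only [Function.comp_apply]
    exact Nat.mul_div_cancel_left b hg

/-- Reindexing `g = δ * j`. -/
lemma reindex_sum (n d δ k : ℕ) (hδ : 0 < δ) :
    ∑ g ∈ (Finset.Icc 1 n).filter (fun g => g % d = 1 % d ∧ δ ∣ g), (fk k (n / g) : ℤ)
      = ∑ j ∈ (Finset.Icc 1 (n / δ)).filter (fun j => δ * j % d = 1 % d),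
          (fk k (n / (j * δ)) : ℤ) := by
  refine Finset.sum_nbij' (fun g => g / δ) (fun j => δ * j) ?hi ?hj ?li ?ri ?he
  case hi =>
    intro g hg
    simp only [Finset.mem_filter, Finset.mem_Icc] at hg ⊢
    obtain ⟨⟨h1, h2⟩, hmod, hdvd⟩ := hg
    refine ⟨⟨(Nat.one_le_div_iff hδ).2 (Nat.le_of_dvd h1 hdvd), Nat.div_le_div_right h2⟩, ?_⟩
    rw [Nat.mul_div_cancel' hdvd, hmod]
  case hj =>
    intro j hj
    simp only [Finset.mem_filter, Finset.mem_Icc] at hj ⊢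
    obtain ⟨⟨h1, h2⟩, hmod⟩ := hj
    refine ⟨⟨Nat.mul_pos hδ h1, ?_⟩, hmod, Dvd.intro j rfl⟩
    calc δ * j ≤ δ * (n / δ) := Nat.mul_le_mul_left δ h2
      _ ≤ n := Nat.mul_div_le n δ
  case li =>
    intro g hg
    simp only [Finset.mem_filter, Finset.mem_Icc] at hg
    exact Nat.mul_div_cancel' hg.2.2
  case ri =>
    intro j hj
    exact Nat.mul_div_cancel_left j hδ
  case he =>
    intro g hg
    simp only [Finset.mem_filter, Finset.mem_Icc] at hg
    rw [Nat.div_mul_cancel hg.2.2]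

theorem MbarK_eq (n k : ℕ) (hn : 0 < n) (hk : 0 < k) (hkn : k ≤ n) :
    (MbarK k n : ℤ) = ∑ d ∈ n.divisors, (Nat.totient d : ℤ) *
      ∑ δ ∈ n.divisors.filter (fun δ => Nat.gcd δ d = 1), (moebius δ) *
        ∑ j ∈ (Finset.Icc 1 (n / δ)).filter (fun j => δ * j % d = 1 % d),
          (fk k (n / (j * δ)) : ℤ) := by
  classical
  set S := (Finset.Icc 1 n).powerset.filter
      (fun A => A.card = k ∧ Nat.gcd (A.gcd _root_.id) n = 1) with hS
  set T := (Finset.Icc 1 n).filter (fun g => Nat.gcd g n = 1) with hT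
  -- Step 1: group subsets by their gcd
  have hmaps : ∀ A ∈ S, A.gcd _root_.id ∈ T := by
    intro A hA
    simp only [hS, Finset.mem_filter, Finset.mem_powerset] at hA
    obtain ⟨hsub, hcard, hcop⟩ := hA
    obtain ⟨a, ha⟩ := Finset.card_pos.1 (hcard ▸ hk)
    have ha' : 1 ≤ a ∧ a ≤ n := by simpa using hsub ha
    have hdvd : A.gcd _root_.id ∣ a := Finset.gcd_dvd ha
    have hpos : 0 < A.gcd _root_.id := by
      rcases Nat.eq_zero_or_pos (A.gcd _root_.id) with h | h
      · rw [h, zero_dvd_iff] at hdvd; omega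
      · exact h
    simp only [hT, Finset.mem_filter, Finset.mem_Icc]
    exact ⟨⟨hpos, le_trans (Nat.le_of_dvd (by omega) hdvd) ha'.2⟩, hcop⟩
  have step1 : (MbarK k n : ℤ) =
      ∑ g ∈ T, (fk k (n / g) : ℤ) * (Nat.gcd (g - 1) n : ℤ) := by
    rw [MbarK, Nat.cast_sum]
    rw [← Finset.sum_fiberwise_of_maps_to hmaps
      (fun A => (Nat.gcd (A.gcd _root_.id - 1) n : ℤ))]
    apply Finset.sum_congr rfl
    intro g hg
    simp only [hT, Finset.mem_filter, Finset.mem_Icc] at hg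
    have hfib : S.filter (fun A => A.gcd _root_.id = g)
        = (Finset.Icc 1 n).powerset.filter (fun A => A.card = k ∧ A.gcd _root_.id = g) := by
      rw [hS, Finset.filter_filter]
      apply Finset.filter_congr
      intro A _
      constructor
      · rintro ⟨⟨h1, -⟩, h3⟩; exact ⟨h1, h3⟩
      · rintro ⟨h1, h3⟩; exact ⟨⟨h1, h3 ▸ hg.2⟩, h3⟩
    calc ∑ A ∈ S.filter (fun A => A.gcd _root_.id = g), (Nat.gcd (A.gcd _root_.id - 1) n : ℤ)
        = ∑ A ∈ S.filter (fun A => A.gcd _root_.id = g), (Nat.gcd (g - 1) n : ℤ) := by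
          apply Finset.sum_congr rfl
          intro A hA
          simp only [Finset.mem_filter] at hA
          rw [hA.2]
      _ = (S.filter (fun A => A.gcd _root_.id = g)).card • (Nat.gcd (g - 1) n : ℤ) :=
          Finset.sum_const _
      _ = (fk k (n / g) : ℤ) * (Nat.gcd (g - 1) n : ℤ) := by
          rw [hfib, card_gcd_eq n k g hg.1.1, nsmul_eq_mul]
  rw [step1]
  -- Step 2: expand gcd (g-1) n via totients and swap
  have step2 : ∑ g ∈ T, (fk k (n / g) : ℤ) * (Nat.gcd (g - 1) n : ℤ)
      = ∑ d ∈ n.divisors, (Nat.totient d : ℤ) *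
          ∑ g ∈ T.filter (fun g => g % d = 1 % d), (fk k (n / g) : ℤ) := by
    have expand : ∀ g ∈ T, (fk k (n / g) : ℤ) * (Nat.gcd (g - 1) n : ℤ)
        = ∑ d ∈ n.divisors, (if g % d = 1 % d then (Nat.totient d : ℤ) * fk k (n / g) else 0) := by
      intro g hg
      simp only [hT, Finset.mem_filter, Finset.mem_Icc] at hg
      rw [gcd_eq_sum_totient' (g - 1) n hn, Nat.cast_sum, Finset.mul_sum, Finset.sum_filter]
      apply Finset.sum_congr rfl
      intro d hd
      have hcond : (d ∣ g - 1) ↔ (g % d = 1 % d) := by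
        rw [← Nat.modEq_iff_dvd' hg.1.1]
        exact ⟨fun h => h.symm, fun h => h.symm⟩
      simp only [hcond]
      split <;> ring
    rw [Finset.sum_congr rfl expand, Finset.sum_comm]
    apply Finset.sum_congr rfl
    intro d _
    rw [Finset.mul_sum, ← Finset.sum_filter]
  rw [step2]
  -- Step 3: for each d, Möbius-invert the coprimality condition and reindex
  apply Finset.sum_congr rfl
  intro d hd
  simp only [Nat.mem_divisors] at hd
  congr 1
  -- inner goal:  ∑ over T.filter (g % d = 1 % d)  =  δ-sum
  have hTfilter : T.filter (fun g => g % d = 1 % d)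
      = ((Finset.Icc 1 n).filter (fun g => g % d = 1 % d)).filter
          (fun g => Nat.gcd g n = 1) := by
    rw [hT, Finset.filter_filter, Finset.filter_filter]
    apply Finset.filter_congr
    intro g _
    exact ⟨fun ⟨a, b⟩ => ⟨b, a⟩, fun ⟨a, b⟩ => ⟨b, a⟩⟩
  have step3 : ∑ g ∈ T.filter (fun g => g % d = 1 % d), (fk k (n / g) : ℤ)
      = ∑ δ ∈ n.divisors, (moebius δ : ℤ) *
          ∑ g ∈ (Finset.Icc 1 n).filter (fun g => g % d = 1 % d ∧ δ ∣ g),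
            (fk k (n / g) : ℤ) := by
    rw [hTfilter, Finset.sum_filter]
    have expand : ∀ g ∈ (Finset.Icc 1 n).filter (fun g => g % d = 1 % d),
        (if Nat.gcd g n = 1 then (fk k (n / g) : ℤ) else 0)
        = ∑ δ ∈ n.divisors, (if δ ∣ g then (moebius δ : ℤ) * fk k (n / g) else 0) := by
      intro g _
      have : (if Nat.gcd g n = 1 then (fk k (n / g) : ℤ) else 0)
          = (if Nat.gcd g n = 1 then (1:ℤ) else 0) * fk k (n / g) := by
        split <;> ring
      rw [this, moebius_ind g n hn, Finset.sum_mul, Finset.sum_filter]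
    rw [Finset.sum_congr rfl expand, Finset.sum_comm]
    apply Finset.sum_congr rfl
    intro δ _
    rw [Finset.mul_sum, ← Finset.sum_filter, Finset.filter_filter]
  rw [step3]
  -- Step 4: reindex g = δ * j and restrict to gcd δ d = 1
  have step4 : ∀ δ ∈ n.divisors,
      (moebius δ : ℤ) *
        ∑ g ∈ (Finset.Icc 1 n).filter (fun g => g % d = 1 % d ∧ δ ∣ g), (fk k (n / g) : ℤ)
      = (moebius δ : ℤ) *
        ∑ j ∈ (Finset.Icc 1 (n / δ)).filter (fun j => δ * j % d = 1 % d),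
          (fk k (n / (j * δ)) : ℤ) := by
    intro δ hδ
    simp only [Nat.mem_divisors] at hδ
    have hδpos : 0 < δ := Nat.pos_of_dvd_of_pos hδ.1 hn
    rw [reindex_sum n d δ k hδpos]
  rw [Finset.sum_congr rfl step4]
  -- restrict the δ-sum to gcd δ d = 1
  refine (Finset.sum_filter_of_ne ?_).symm
  intro δ hδ hne
  simp only [Nat.mem_divisors] at hδ
  by_contra hgcd
  apply hne
  have hempty : (Finset.Icc 1 (n / δ)).filter (fun j => δ * j % d = 1 % d) = ∅ := by
    rw [Finset.filter_eq_empty_iff]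
    intro j hj
    simp only [Finset.mem_Icc] at hj
    intro hmod
    have h1le : 1 ≤ δ * j := by
      have hδpos : 0 < δ := Nat.pos_of_dvd_of_pos hδ.1 hn
      exact Nat.mul_pos hδpos (by omega)
    have hdvd1 : d ∣ δ * j - 1 := (Nat.modEq_iff_dvd' h1le).1 hmod.symm
    have he1 : Nat.gcd δ d ∣ δ * j - 1 := dvd_trans (Nat.gcd_dvd_right δ d) hdvd1
    have he2 : Nat.gcd δ d ∣ δ * j := dvd_trans (Nat.gcd_dvd_left δ d) (Dvd.intro j rfl)
    have : Nat.gcd δ d ∣ 1 := by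
      have := Nat.dvd_sub he2 he1
      rwa [Nat.sub_sub_self h1le] at this
    exact hgcd (Nat.eq_one_of_dvd_one this)
  rw [hempty, Finset.sum_empty, mul_zero]
end

section
/- For every prime p and every integer t ≥ 1, \(\overline{M}(p^t) = \sum_{j=1}^{p^t} f\left(\left\lfloor \frac{p^t}{j}\right\rfloor\right) - \sum_{j=1}^{p^{t-1}} f\left(\left\lfloor \frac{p^{t-1}}{j}\right\rfloor\right) + (p-1)\sum_{s=1}^{t} p^{s-1} \sum_{m=1}^{p^{t-s}} f\left(\left\lfloor \frac{p^t}{1+(m-1)p^s}\right\rfloor\right)\). -/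
open Finset

/-- `f m` is the number of nonempty subsets `A` of `{1, 2, ..., m}` whose elements are
relatively prime, i.e. the gcd of the elements of `A` is `1`. -/
def f (m : ℕ) : ℕ :=
  ((Finset.Icc 1 m).powerset.filter (fun A => A.Nonempty ∧ A.gcd _root_.id = 1)).card

/-- `Mbar n = ∑ ((A) - 1, n)`, summed over all nonempty subsets `A` of `{1, 2, ..., n}`
such that the gcd `(A)` of the elements of `A` is relatively prime to `n`. -/
def Mbar (n : ℕ) : ℕ :=
  ∑ A ∈ (Finset.Icc 1 n).powerset.filter
      (fun A => A.Nonempty ∧ Nat.gcd (A.gcd _root_.id) n = 1),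
    Nat.gcd (A.gcd _root_.id - 1) n

/-!
The subsets of `{1, …, n}` with gcd `d` are the `d`-multiples of the subsets of `{1, …, n / d}`
with gcd `1`, so `Mbar n = ∑_{d ≤ n, (d, n) = 1} (d - 1, n) f (n / d)`. For `n = p ^ t`, Gauss's
identity `∑_{e ∣ m} φ e = m` gives `(a, p ^ t) = 1 + (p - 1) ∑_{s=1}^t p ^ (s - 1) [p ^ s ∣ a]`.
The summand `1` produces the first two sums (all `j ≤ p ^ t` minus the multiples of `p`), and the
`s`-th summand collects the `d ≡ 1 (mod p ^ s)`, i.e. `d = 1 + (m - 1) p ^ s`; the condition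
`p ∤ d` can be dropped there, because `(d - 1, p ^ t) = 1` whenever `p ∣ d`.
-/

theorem Nat.gcd_eq_sum_totient_filter_dvd (a : ℕ) {n : ℕ} (hn : n ≠ 0) :
    Nat.gcd a n = ∑ d ∈ n.divisors with d ∣ a, d.totient := by
  have : (Nat.gcd a n).divisors = {d ∈ n.divisors | d ∣ a} := by
    ext d
    simp [Nat.dvd_gcd_iff, hn, and_comm]
  rw [← this, Nat.sum_totient]

theorem Nat.cast_gcd_prime_pow {p : ℕ} (hp : p.Prime) (a t : ℕ) :
    (Nat.gcd a (p ^ t) : ℤ) =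
      1 + ((p : ℤ) - 1) * ∑ s ∈ Icc 1 t, (p : ℤ) ^ (s - 1) * if p ^ s ∣ a then 1 else 0 := by
  rw [Nat.gcd_eq_sum_totient_filter_dvd a (pow_ne_zero t hp.ne_zero), Nat.divisors_prime_pow hp,
    filter_map, sum_map, sum_filter, range_eq_Ico, Nat.cast_sum, sum_eq_sum_Ico_succ_bot (by omega)]
  simp only [Function.Embedding.coeFn_mk, Function.comp, pow_zero, one_dvd, if_true,
    Nat.totient_one]
  rw [mul_sum, zero_add, Finset.Ico_add_one_right_eq_Icc]
  push_cast
  congr 1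
  refine sum_congr rfl fun s hs => ?_
  rw [Nat.totient_prime_pow hp (mem_Icc.mp hs).1]
  split_ifs <;> push_cast [hp.one_le] <;> ring

theorem gcd_image_mul_right (B : Finset ℕ) (d : ℕ) :
    (B.image (· * d)).gcd id = B.gcd id * d := by
  simpa [gcd_image, Function.comp_def] using Finset.gcd_mul_right (s := B) (f := id) (a := d)

theorem image_div_image_mul {d : ℕ} (hd : d ≠ 0) (B : Finset ℕ) :
    (B.image (· * d)).image (· / d) = B := by
  simp [image_image, Function.comp_def, Nat.mul_div_cancel _ (Nat.pos_of_ne_zero hd)]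

theorem image_mul_image_div {d : ℕ} {A : Finset ℕ} (hA : ∀ x ∈ A, d ∣ x) :
    (A.image (· / d)).image (· * d) = A := by
  rw [image_image]
  conv_rhs => rw [← image_id (s := A)]
  exact image_congr fun x hx => Nat.div_mul_cancel (hA x hx)

theorem card_filter_gcd_eq_f {d : ℕ} (hd : d ≠ 0) (n : ℕ) :
    #{A ∈ (Icc 1 n).powerset | A.Nonempty ∧ A.gcd id = d} = f (n / d) := by
  symm
  refine card_nbij' (fun B => B.image (· * d)) (fun A => A.image (· / d)) ?_ ?_ ?_ ?_
  · intro B hB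
    simp only [coe_filter, mem_powerset, Set.mem_ofPred_eq] at hB ⊢
    obtain ⟨hsub, hne, hgcd⟩ := hB
    refine ⟨fun x hx => ?_, hne.image _, by rw [gcd_image_mul_right, hgcd, one_mul]⟩
    obtain ⟨y, hy, rfl⟩ := mem_image.mp hx
    have := mem_Icc.mp (hsub hy)
    rw [Nat.le_div_iff_mul_le (Nat.pos_of_ne_zero hd)] at this
    exact mem_Icc.mpr ⟨Nat.one_le_iff_ne_zero.mpr (mul_ne_zero (by omega) hd), this.2⟩
  · intro A hA
    simp only [coe_filter, mem_powerset, Set.mem_ofPred_eq] at hA ⊢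
    obtain ⟨hsub, hne, hgcd⟩ := hA
    have hdvd : ∀ x ∈ A, d ∣ x := fun x hx => hgcd ▸ gcd_dvd hx
    refine ⟨fun y hy => ?_, hne.image _, ?_⟩
    · obtain ⟨x, hx, rfl⟩ := mem_image.mp hy
      have := mem_Icc.mp (hsub hx)
      exact mem_Icc.mpr ⟨Nat.div_pos (Nat.le_of_dvd (by omega) (hdvd x hx)) (Nat.pos_of_ne_zero hd),
        Nat.div_le_div_right this.2⟩
    · have := gcd_image_mul_right (A.image (· / d)) d
      rw [image_mul_image_div hdvd, hgcd] at this
      exact (Nat.mul_eq_right hd).mp this.symm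
  · exact fun B _ => image_div_image_mul hd B
  · intro A hA
    simp only [coe_filter, Set.mem_ofPred_eq] at hA
    exact image_mul_image_div fun x hx => hA.2.2 ▸ gcd_dvd hx

theorem gcd_mem_Icc_of_subset_Icc {A : Finset ℕ} {n : ℕ} (hsub : A ⊆ Icc 1 n) (hne : A.Nonempty) :
    A.gcd id ∈ Icc 1 n := by
  obtain ⟨x, hx⟩ := hne
  have hx' := mem_Icc.mp (hsub hx)
  have hle : A.gcd id ≤ x := Nat.le_of_dvd (by omega) (gcd_dvd hx)
  refine mem_Icc.mpr ⟨Nat.pos_of_ne_zero fun h => ?_, hle.trans hx'.2⟩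
  have : x = 0 := Finset.gcd_eq_zero_iff.mp h x hx
  omega

theorem Mbar_eq_sum_gcd_mul_f (n : ℕ) :
    Mbar n = ∑ d ∈ Icc 1 n with Nat.Coprime d n, Nat.gcd (d - 1) n * f (n / d) := by
  unfold Mbar
  rw [← sum_fiberwise_of_maps_to (g := fun A => A.gcd id) (t := {d ∈ Icc 1 n | Nat.Coprime d n})]
  · refine sum_congr rfl fun d hd => ?_
    simp only [mem_filter, mem_Icc] at hd
    rw [sum_congr rfl fun A hA => by rw [(mem_filter.mp hA).2], sum_const, smul_eq_mul,
      filter_filter, mul_comm, ← card_filter_gcd_eq_f (by omega : d ≠ 0) n]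
    congr 2
    refine filter_congr fun A _ => ?_
    constructor
    · rintro ⟨⟨hne, _⟩, hgcd⟩; exact ⟨hne, hgcd⟩
    · rintro ⟨hne, hgcd⟩; exact ⟨⟨hne, hgcd ▸ hd.2⟩, hgcd⟩
  · intro A hA
    simp only [mem_filter, mem_powerset] at hA
    exact mem_filter.mpr ⟨gcd_mem_Icc_of_subset_Icc hA.1 hA.2.1, hA.2.2⟩

theorem sum_Icc_filter_dvd {M : Type*} [AddCommMonoid M] (g : ℕ → M) {p : ℕ} (hp : p ≠ 0) (m : ℕ) :
    ∑ j ∈ Icc 1 (p * m) with p ∣ j, g j = ∑ j ∈ Icc 1 m, g (p * j) := by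
  have hp' := Nat.pos_of_ne_zero hp
  symm
  refine sum_nbij' (p * ·) (· / p) (fun j hj => ?_) (fun j hj => ?_) (fun j _ => ?_)
    (fun j hj => ?_) (fun _ _ => rfl)
  · simp only [mem_Icc, mem_filter] at hj ⊢
    exact ⟨⟨by nlinarith, Nat.mul_le_mul_left p hj.2⟩, dvd_mul_right p j⟩
  · simp only [mem_Icc, mem_filter] at hj ⊢
    obtain ⟨⟨h1, h2⟩, k, rfl⟩ := hj
    rw [Nat.mul_div_cancel_left k hp']
    exact ⟨Nat.pos_of_ne_zero (by rintro rfl; simp at h1), Nat.le_of_mul_le_mul_left h2 hp'⟩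
  · exact Nat.mul_div_cancel_left j hp'
  · exact Nat.mul_div_cancel' (mem_filter.mp hj).2

theorem sum_Icc_filter_dvd_sub_one {M : Type*} [AddCommMonoid M] (g : ℕ → M) {q : ℕ} (hq : q ≠ 0)
    (k : ℕ) :
    ∑ d ∈ Icc 1 (k * q) with q ∣ d - 1, g d = ∑ m ∈ Icc 1 k, g (1 + (m - 1) * q) := by
  symm
  refine sum_nbij' (fun m => 1 + (m - 1) * q) (fun d => (d - 1) / q + 1) (fun m hm => ?_)
    (fun d hd => ?_) (fun m hm => ?_) (fun d hd => ?_) (fun _ _ => rfl)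
  · simp only [mem_Icc, mem_filter] at hm ⊢
    refine ⟨⟨by omega, ?_⟩, by simp⟩
    have : (m - 1) * q + q ≤ k * q := by
      rw [← Nat.succ_mul]; exact Nat.mul_le_mul_right q (by omega)
    omega
  · simp only [mem_Icc, mem_filter] at hd ⊢
    obtain ⟨⟨h1, h2⟩, hdvd⟩ := hd
    refine ⟨Nat.le_add_left 1 _, ?_⟩
    have := Nat.div_lt_of_lt_mul (m := d - 1) (n := q) (k := k) (by rw [mul_comm]; omega)
    omega
  · simp only [mem_Icc] at hm
    rw [Nat.add_sub_cancel_left, Nat.mul_div_cancel _ (Nat.pos_of_ne_zero hq)]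
    omega
  · simp only [mem_Icc, mem_filter] at hd
    rw [Nat.add_sub_cancel, Nat.div_mul_cancel hd.2]
    omega

theorem sum_gcd_sub_one_prime_pow_mul {p : ℕ} (hp : p.Prime) (t : ℕ) (F : ℕ → ℤ) :
    ∑ d ∈ Icc 1 (p ^ t), ((Nat.gcd (d - 1) (p ^ t) : ℤ) - 1) * F d =
      ((p : ℤ) - 1) * ∑ s ∈ Icc 1 t, (p : ℤ) ^ (s - 1) *
        ∑ m ∈ Icc 1 (p ^ (t - s)), F (1 + (m - 1) * p ^ s) := by
  calc ∑ d ∈ Icc 1 (p ^ t), ((Nat.gcd (d - 1) (p ^ t) : ℤ) - 1) * F d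
      = ∑ d ∈ Icc 1 (p ^ t), ∑ s ∈ Icc 1 t,
          ((p : ℤ) - 1) * (p : ℤ) ^ (s - 1) * if p ^ s ∣ d - 1 then F d else 0 := by
        refine sum_congr rfl fun d _ => ?_
        rw [Nat.cast_gcd_prime_pow hp, add_sub_cancel_left, mul_sum, sum_mul]
        refine sum_congr rfl fun s _ => ?_
        split_ifs <;> ring
    _ = ((p : ℤ) - 1) * ∑ s ∈ Icc 1 t, (p : ℤ) ^ (s - 1) *
          ∑ d ∈ Icc 1 (p ^ t) with p ^ s ∣ d - 1, F d := by
        rw [sum_comm, mul_sum]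
        simp only [sum_filter, mul_sum, mul_assoc]
    _ = _ := by
        refine congrArg _ (sum_congr rfl fun s hs => ?_)
        rw [← Nat.pow_sub_mul_pow p (mem_Icc.mp hs).2,
          sum_Icc_filter_dvd_sub_one _ (pow_ne_zero s hp.ne_zero)]

theorem Mbar_prime_pow (p t : ℕ) (hp : p.Prime) (ht : 1 ≤ t) :
    (Mbar (p ^ t) : ℤ) =
      (∑ j ∈ Finset.Icc 1 (p ^ t), (f (p ^ t / j) : ℤ))
      - (∑ j ∈ Finset.Icc 1 (p ^ (t - 1)), (f (p ^ (t - 1) / j) : ℤ))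
      + ((p : ℤ) - 1) * ∑ s ∈ Finset.Icc 1 t, (p : ℤ) ^ (s - 1) *
          ∑ m ∈ Finset.Icc 1 (p ^ (t - s)), (f (p ^ t / (1 + (m - 1) * p ^ s)) : ℤ) := by
  have hcop (d : ℕ) : Nat.Coprime d (p ^ t) ↔ ¬ p ∣ d := by
    rw [Nat.coprime_pow_right_iff ht, Nat.coprime_comm, hp.coprime_iff_not_dvd]
  have hpow : p ^ t = p * p ^ (t - 1) := by rw [← pow_succ']; congr; omega
  have hmultiples : ∑ j ∈ Icc 1 (p ^ t) with p ∣ j, (f (p ^ t / j) : ℤ) =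
      ∑ j ∈ Icc 1 (p ^ (t - 1)), (f (p ^ (t - 1) / j) : ℤ) := by
    rw [hpow, sum_Icc_filter_dvd _ hp.ne_zero]
    simp only [Nat.mul_div_mul_left _ _ hp.pos]
  have hgcd_one : ∀ d ∈ Icc 1 (p ^ t), ((Nat.gcd (d - 1) (p ^ t) : ℤ) - 1) * f (p ^ t / d) ≠ 0 →
      ¬ p ∣ d := by
    intro d hd hne hpd
    have hcons : Nat.Coprime (d - 1) d :=
      (Nat.coprime_self_sub_left (mem_Icc.mp hd).1).mpr (Nat.coprime_one_left d)
    simp [(hcons.coprime_dvd_right hpd).pow_right t] at hne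
  rw [Mbar_eq_sum_gcd_mul_f, Nat.cast_sum, filter_congr fun d _ => hcop d,
    ← sum_gcd_sub_one_prime_pow_mul hp t (fun d => (f (p ^ t / d) : ℤ)),
    ← sum_filter_of_ne hgcd_one, ← hmultiples,
    ← sum_filter_add_sum_filter_not (Icc 1 (p ^ t)) (p ∣ ·)]
  push_cast
  simp only [sub_mul, one_mul, sum_sub_distrib]
  ring
end

section
/- For every prime p, \(\overline{M}(p) = p\,f(p) - 1 + \sum_{j=2}^{p} f\left(\left\lfloor \frac{p}{j}\right\rfloor\right)\). -/
open Finset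

lemma count_gcd (n d : ℕ) (hd : 0 < d) :
    ((Finset.Icc 1 n).powerset.filter (fun A => A.Nonempty ∧ A.gcd _root_.id = d)).card
      = f (n / d) := by
  unfold f
  apply Finset.card_nbij' (fun A => A.image (· / d)) (fun B => B.image (· * d))
  · intro A hA
    simp only [Finset.mem_coe, mem_filter, mem_powerset] at hA ⊢
    obtain ⟨hsub, hne, hgcd⟩ := hA
    have hdvd : ∀ a ∈ A, d ∣ a := fun a ha => hgcd ▸ Finset.gcd_dvd ha
    refine ⟨?_, hne.image _, ?_⟩
    · intro x hx
      simp only [mem_image] at hx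
      obtain ⟨a, ha, rfl⟩ := hx
      have h1 : 1 ≤ a ∧ a ≤ n := by simpa using hsub ha
      exact mem_Icc.mpr ⟨(Nat.one_le_div_iff hd).mpr (Nat.le_of_dvd h1.1 (hdvd a ha)),
        Nat.div_le_div_right h1.2⟩
    · have h1 : (A.image (· / d)).gcd _root_.id = A.gcd (fun a => a / d) := by
        rw [Finset.gcd_image]; rfl
      have h2 : A.gcd (fun a => d * (a / d)) = A.gcd _root_.id :=
        Finset.gcd_congr rfl (fun a ha => Nat.mul_div_cancel' (hdvd a ha))
      have h3 : d * A.gcd (fun a => a / d) = d := by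
        have := (Finset.gcd_mul_left (s := A) (f := fun a => a / d) (a := d))
        simp only [normalize_eq] at this
        rw [← this, h2, hgcd]
      rw [h1]
      have h4 : d * A.gcd (fun a => a / d) = d * 1 := by rw [h3, mul_one]
      exact Nat.eq_of_mul_eq_mul_left hd h4
  · intro B hB
    simp only [Finset.mem_coe, mem_filter, mem_powerset] at hB ⊢
    obtain ⟨hsub, hne, hgcd⟩ := hB
    refine ⟨?_, hne.image _, ?_⟩
    · intro x hx
      simp only [mem_image] at hx
      obtain ⟨b, hb, rfl⟩ := hx
      have h1 : 1 ≤ b ∧ b ≤ n / d := by simpa using hsub hb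
      refine mem_Icc.mpr ⟨Nat.mul_pos h1.1 hd, ?_⟩
      calc b * d ≤ (n / d) * d := Nat.mul_le_mul_right d h1.2
        _ ≤ n := Nat.div_mul_le_self n d
    · have h1 : (B.image (· * d)).gcd _root_.id = B.gcd (fun b => b * d) := by
        rw [Finset.gcd_image]; rfl
      have h2 : B.gcd (fun b => b * d) = B.gcd (fun b => d * b) :=
        Finset.gcd_congr rfl (fun b _ => Nat.mul_comm b d)
      have h3 : B.gcd (fun b => d * _root_.id b) = d * B.gcd _root_.id := by
        have := (Finset.gcd_mul_left (s := B) (f := _root_.id) (a := d))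
        simpa using this
      rw [h1, h2]
      simpa [hgcd] using h3
  · intro A hA
    simp only [Finset.mem_coe, mem_filter, mem_powerset] at hA
    obtain ⟨hsub, hne, hgcd⟩ := hA
    have hdvd : ∀ a ∈ A, d ∣ a := fun a ha => hgcd ▸ Finset.gcd_dvd ha
    dsimp only
    rw [Finset.image_image]
    rw [show ((fun x => x * d) ∘ fun x => x / d) = fun a => a / d * d from rfl]
    nth_rewrite 2 [← Finset.image_id (s := A)]
    exact Finset.image_congr (fun a ha => Nat.div_mul_cancel (hdvd a ha))
  · intro B hB
    dsimp only
    rw [Finset.image_image]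
    rw [show ((fun x => x / d) ∘ fun x => x * d) = fun b => b * d / d from rfl]
    nth_rewrite 2 [← Finset.image_id (s := B)]
    exact Finset.image_congr (fun b _ => Nat.mul_div_cancel b hd)

lemma f_one : f 1 = 1 := by decide

theorem Mbar_prime (p : ℕ) (hp : p.Prime) :
    (Mbar p : ℤ) = (p : ℤ) * (f p : ℤ) - 1 + ∑ j ∈ Finset.Icc 2 p, (f (p / j) : ℤ) := by
  have hp1 : 1 < p := hp.one_lt
  have hmaps : ∀ A ∈ (Finset.Icc 1 p).powerset.filter
      (fun A => A.Nonempty ∧ Nat.gcd (A.gcd _root_.id) p = 1),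
      A.gcd _root_.id ∈ Finset.Icc 1 p := by
    intro A hA
    simp only [mem_filter, mem_powerset] at hA
    obtain ⟨hsub, hne, _⟩ := hA
    obtain ⟨a, ha⟩ := hne
    have h := mem_Icc.mp (hsub ha)
    have hdvd : A.gcd _root_.id ∣ a := Finset.gcd_dvd ha
    exact mem_Icc.mpr ⟨Nat.pos_of_dvd_of_pos hdvd h.1, le_trans (Nat.le_of_dvd h.1 hdvd) h.2⟩
  have key : Mbar p = ∑ d ∈ Finset.Icc 1 p,
      Nat.gcd (d - 1) p * (if d = p then 0 else f (p / d)) := by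
    rw [Mbar, ← Finset.sum_fiberwise_of_maps_to hmaps
      (fun A => Nat.gcd (A.gcd _root_.id - 1) p)]
    refine Finset.sum_congr rfl (fun d hd => ?_)
    have hd1 := mem_Icc.mp hd
    have hconst : ∀ A ∈ Finset.filter (fun A => A.gcd _root_.id = d)
        (Finset.filter (fun A => A.Nonempty ∧ Nat.gcd (A.gcd _root_.id) p = 1)
          (Finset.Icc 1 p).powerset),
        Nat.gcd (A.gcd _root_.id - 1) p = Nat.gcd (d - 1) p := by
      intro A hA
      rw [(Finset.mem_filter.mp hA).2]
    rw [Finset.sum_congr rfl hconst, Finset.sum_const, smul_eq_mul, mul_comm]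
    congr 1
    by_cases hdp : d = p
    · rw [if_pos hdp]
      rw [Finset.card_eq_zero, Finset.eq_empty_iff_forall_notMem]
      intro A hA
      rw [Finset.mem_filter, Finset.mem_filter] at hA
      have h1 := hA.1.2.2
      rw [hA.2, hdp, Nat.gcd_self] at h1
      omega
    · rw [if_neg hdp, Finset.filter_filter]
      have hcop : Nat.gcd d p = 1 := by
        have : ¬ p ∣ d := fun h => hdp (le_antisymm hd1.2 (Nat.le_of_dvd hd1.1 h))
        exact Nat.Coprime.gcd_eq_one (Nat.coprime_comm.mp (hp.coprime_iff_not_dvd.mpr this))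
      have hfilt : Finset.filter (fun A : Finset ℕ =>
            (A.Nonempty ∧ Nat.gcd (A.gcd _root_.id) p = 1) ∧ A.gcd _root_.id = d)
            (Finset.Icc 1 p).powerset
          = Finset.filter (fun A => A.Nonempty ∧ A.gcd _root_.id = d)
            (Finset.Icc 1 p).powerset := by
        apply Finset.filter_congr
        intro A _
        constructor
        · rintro ⟨⟨h1, _⟩, h3⟩; exact ⟨h1, h3⟩
        · rintro ⟨h1, h2⟩; exact ⟨⟨h1, by rw [h2]; exact hcop⟩, h2⟩
      rw [hfilt]
      exact count_gcd p d hd1.1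
  have hicc1 : Finset.Icc 1 p = insert 1 (Finset.Icc 2 p) := by
    ext x; simp only [mem_Icc, mem_insert]; omega
  have hicc2 : Finset.Icc 2 p = insert p (Finset.Icc 2 (p - 1)) := by
    ext x; simp only [mem_Icc, mem_insert]; omega
  have h1ni : (1 : ℕ) ∉ Finset.Icc 2 p := by simp
  have hpni : p ∉ Finset.Icc 2 (p - 1) := by simp only [mem_Icc]; omega
  have hcongr1 : ∀ d ∈ Finset.Icc 2 p,
      Nat.gcd (d - 1) p * (if d = p then 0 else f (p / d))
        = if d = p then 0 else f (p / d) := by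
    intro d hd
    have hd1 := mem_Icc.mp hd
    have hg : Nat.gcd (d - 1) p = 1 := by
      have hnd : ¬ p ∣ (d - 1) := by
        intro h
        have := Nat.le_of_dvd (by omega) h
        omega
      exact Nat.Coprime.gcd_eq_one (Nat.coprime_comm.mp (hp.coprime_iff_not_dvd.mpr hnd))
    rw [hg, one_mul]
  have hcongr2 : ∀ d ∈ Finset.Icc 2 (p - 1),
      (if d = p then 0 else f (p / d)) = f (p / d) := by
    intro d hd
    have hd1 := mem_Icc.mp hd
    rw [if_neg (by omega)]
  rw [key, hicc1, Finset.sum_insert h1ni, Finset.sum_congr rfl hcongr1]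
  rw [hicc2, Finset.sum_insert hpni, Finset.sum_insert hpni, if_pos rfl]
  rw [Finset.sum_congr rfl hcongr2]
  rw [if_neg hp1.ne, Nat.gcd_zero_left, Nat.div_one, Nat.div_self (by omega : 0 < p), f_one]
  push_cast
  ring
end

section
/- For every positive integer n, \(\overline{M}_1(n) = \varphi(n)\,\tau(n)\), where \(\varphi\) is Euler's totient function and \(\tau(n)\) is the number of divisors of n. -/
open Finset

lemma fiber_count (n d : ℕ) (hn : 0 < n) (hd : d ∣ n) :
    ((Finset.Icc 1 n).filter (fun a => Nat.gcd a n = 1 ∧ d ∣ a - 1)).card * Nat.totient d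
      = Nat.totient n := by
  haveI : NeZero n := ⟨hn.ne'⟩
  have hdpos : 0 < d := Nat.pos_of_dvd_of_pos hd hn
  haveI : NeZero d := ⟨hdpos.ne'⟩
  set f : (ZMod n)ˣ →* (ZMod d)ˣ := ZMod.unitsMap hd with hf
  have hsurj : Function.Surjective f := ZMod.unitsMap_surjective hd
  -- key iff: for 1 ≤ a, f (unitOfCoprime a h) = 1 ↔ d ∣ a - 1
  have key : ∀ (a : ℕ), 1 ≤ a → ∀ (h : Nat.Coprime a n),
      (f (ZMod.unitOfCoprime a h) = 1 ↔ d ∣ a - 1) := by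
    intro a ha h
    rw [Units.ext_iff]
    have : ((f (ZMod.unitOfCoprime a h) : (ZMod d)ˣ) : ZMod d) = ((a : ℕ) : ZMod d) := by
      simp [hf, ZMod.unitsMap, ZMod.coe_unitOfCoprime, map_natCast]
    rw [this]
    have h1 : ((1 : (ZMod d)ˣ) : ZMod d) = ((1 : ℕ) : ZMod d) := by simp
    rw [h1, ZMod.natCast_eq_natCast_iff]
    constructor
    · intro hmod; exact (Nat.modEq_iff_dvd' ha).mp hmod.symm
    · intro hdvd; exact ((Nat.modEq_iff_dvd' ha).mpr hdvd).symm
  -- card of the finset equals Nat.card of the kernel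
  have hcard : ((Finset.Icc 1 n).filter (fun a => Nat.gcd a n = 1 ∧ d ∣ a - 1)).card
      = Nat.card f.ker := by
    rw [Nat.card_eq_fintype_card, Fintype.card_subtype]
    apply Finset.card_bij (fun a ha => ZMod.unitOfCoprime a (by
      simp only [mem_filter, mem_Icc] at ha; exact ha.2.1))
    · intro a ha
      simp only [mem_filter, mem_Icc] at ha
      simp only [mem_filter, mem_univ, true_and, MonoidHom.mem_ker]
      exact (key a ha.1.1 ha.2.1).mpr ha.2.2
    · intro a ha b hb hab
      simp only [mem_filter, mem_Icc] at ha hb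
      have : ((a : ℕ) : ZMod n) = ((b : ℕ) : ZMod n) := by
        have := congrArg (fun u => ((u : (ZMod n)ˣ) : ZMod n)) hab
        simpa [ZMod.coe_unitOfCoprime] using this
      have hmod := (ZMod.natCast_eq_natCast_iff _ _ _).mp this
      rcases le_total a b with hle | hle
      · have := (Nat.modEq_iff_dvd' hle).mp hmod
        have hlt : b - a < n := by omega
        have := Nat.eq_zero_of_dvd_of_lt this hlt |>.symm
        omega
      · have := (Nat.modEq_iff_dvd' hle).mp hmod.symm
        have hlt : a - b < n := by omega
        have := Nat.eq_zero_of_dvd_of_lt this hlt |>.symm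
        omega
    · intro u hu
      simp only [mem_filter, mem_univ, true_and, MonoidHom.mem_ker] at hu
      rcases eq_or_lt_of_le (show 1 ≤ n from hn) with h1 | h2
    -- n = 1 case
      · refine ⟨1, ?_, ?_⟩
        · simp only [mem_filter, mem_Icc]
          refine ⟨⟨le_refl 1, ?_⟩, ?_, ?_⟩
          · omega
          · simp [Nat.gcd_one_left]
          · simp
        · haveI : Subsingleton (ZMod n) := by rw [← h1]; infer_instance
          haveI : Subsingleton (ZMod n)ˣ := by infer_instance
          exact Subsingleton.elim _ _
      -- n ≥ 2 case
      · haveI : Fact (1 < n) := ⟨h2⟩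
        set a := ((u : ZMod n)).val with hav
        have hvlt : a < n := ZMod.val_lt _
        have hco : Nat.Coprime a n := ZMod.val_coe_unit_coprime u
        have hca : ((a : ℕ) : ZMod n) = (u : ZMod n) := by
          simp [hav, ZMod.natCast_val, ZMod.cast_id]
        have hane : a ≠ 0 := by
          intro h0
          have : (u : ZMod n) = 0 := by rw [← hca, h0]; simp
          exact Units.ne_zero u this
        have hge1 : 1 ≤ a := Nat.one_le_iff_ne_zero.mpr hane
        have huo : ZMod.unitOfCoprime a hco = u := by
          ext; simp [ZMod.coe_unitOfCoprime, hca]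
        refine ⟨a, ?_, huo⟩
        simp only [mem_filter, mem_Icc]
        refine ⟨⟨hge1, hvlt.le⟩, hco, ?_⟩
        rw [← (key a hge1 hco), huo]
        exact hu
  rw [hcard]
  have hq : Nat.card (ZMod n)ˣ = Nat.card ((ZMod n)ˣ ⧸ f.ker) * Nat.card f.ker :=
    Subgroup.card_eq_card_quotient_mul_card_subgroup f.ker
  have he : Nat.card ((ZMod n)ˣ ⧸ f.ker) = Nat.card (ZMod d)ˣ :=
    Nat.card_congr (QuotientGroup.quotientKerEquivOfSurjective f hsurj).toEquiv
  have h1 : Nat.card (ZMod n)ˣ = Nat.totient n := by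
    rw [Nat.card_eq_fintype_card, ZMod.card_units_eq_totient]
  have h2 : Nat.card (ZMod d)ˣ = Nat.totient d := by
    rw [Nat.card_eq_fintype_card, ZMod.card_units_eq_totient]
  rw [← h1, hq, he, h2, mul_comm]

lemma menon (n : ℕ) (hn : 0 < n) :
    ∑ a ∈ (Finset.Icc 1 n).filter (fun a => Nat.gcd a n = 1), Nat.gcd (a - 1) n
      = Nat.totient n * n.divisors.card := by
  set S := (Finset.Icc 1 n).filter (fun a => Nat.gcd a n = 1) with hS
  have step1 : ∀ a ∈ S, Nat.gcd (a - 1) n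
      = ∑ d ∈ n.divisors.filter (· ∣ a - 1), Nat.totient d := by
    intro a _
    have hdiv : (Nat.gcd (a - 1) n).divisors = n.divisors.filter (· ∣ a - 1) := by
      ext d
      simp only [Nat.mem_divisors, mem_filter, Nat.dvd_gcd_iff]
      constructor
      · rintro ⟨⟨h1, h2⟩, _⟩; exact ⟨⟨h2, hn.ne'⟩, h1⟩
      · rintro ⟨⟨h1, _⟩, h2⟩
        refine ⟨⟨h2, h1⟩, ?_⟩
        exact Nat.gcd_ne_zero_right hn.ne'
    rw [← hdiv, Nat.sum_totient]
  rw [Finset.sum_congr rfl step1]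
  have swap : ∑ a ∈ S, ∑ d ∈ n.divisors.filter (· ∣ a - 1), Nat.totient d
      = ∑ d ∈ n.divisors, (S.filter (fun a => d ∣ a - 1)).card * Nat.totient d := by
    simp_rw [Finset.sum_filter]
    rw [Finset.sum_comm]
    congr 1
    ext d
    rw [← Finset.sum_filter]
    simp [Finset.sum_const, mul_comm]
  rw [swap]
  have each : ∀ d ∈ n.divisors, (S.filter (fun a => d ∣ a - 1)).card * Nat.totient d
      = Nat.totient n := by
    intro d hd
    rw [Nat.mem_divisors] at hd
    have := fiber_count n d hn hd.1
    rw [← this]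
    congr 2
    rw [hS, Finset.filter_filter]
  rw [Finset.sum_congr rfl each, Finset.sum_const, smul_eq_mul, mul_comm]

theorem MbarK_one (n : ℕ) (hn : 0 < n) :
    MbarK 1 n = Nat.totient n * n.divisors.card := by
  rw [← menon n hn]
  unfold MbarK
  have himg : (Finset.Icc 1 n).powerset.filter
      (fun A => A.card = 1 ∧ Nat.gcd (A.gcd _root_.id) n = 1)
      = ((Finset.Icc 1 n).filter (fun a => Nat.gcd a n = 1)).image
          (fun a => ({a} : Finset ℕ)) := by
    ext A
    simp only [mem_filter, mem_powerset, mem_image, mem_Icc]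
    constructor
    · rintro ⟨hsub, hcard, hgcd⟩
      obtain ⟨a, rfl⟩ := Finset.card_eq_one.mp hcard
      refine ⟨a, ⟨?_, ?_⟩, rfl⟩
      · simpa [Finset.singleton_subset_iff, mem_Icc] using hsub
      · simpa [Finset.gcd_singleton] using hgcd
    · rintro ⟨a, ⟨ha, hgcd⟩, rfl⟩
      refine ⟨?_, Finset.card_singleton a, ?_⟩
      · simp [Finset.singleton_subset_iff, mem_Icc, ha]
      · simpa [Finset.gcd_singleton] using hgcd
  rw [himg, Finset.sum_image (by intro a _ b _ h; exact Finset.singleton_inj.mp h)]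
  simp [Finset.gcd_singleton]
end

section
/- For every positive integer n, \(f(n) = \sum_{d=1}^{n} \mu(d)\left(2^{\lfloor n/d \rfloor} - 1\right)\), where \(\mu\) is the Möbius function. -/
open Finset ArithmeticFunction

lemma sum_moebius_eq_ite (g : ℕ) :
    (∑ d ∈ g.divisors, moebius d) = if g = 1 then 1 else 0 := by
  have h : ((moebius * ArithmeticFunction.zeta : ArithmeticFunction ℤ)) g = ∑ d ∈ g.divisors, moebius d :=
    ArithmeticFunction.coe_mul_zeta_apply
  rw [ArithmeticFunction.moebius_mul_coe_zeta] at h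
  rw [← h, ArithmeticFunction.one_apply]

lemma count_aux (n d : ℕ) :
    (((Finset.Icc 1 n).powerset.filter
      (fun A => A.Nonempty ∧ d ∣ A.gcd _root_.id)).card : ℤ) = 2 ^ (n / d) - 1 := by
  have hset : (Finset.Icc 1 n).powerset.filter (fun A => A.Nonempty ∧ d ∣ A.gcd _root_.id)
      = ((Finset.Icc 1 n).filter (fun x => d ∣ x)).powerset.filter (fun A => A.Nonempty) := by
    ext A
    simp only [Finset.mem_filter, Finset.mem_powerset, Finset.dvd_gcd_iff, id_eq]
    constructor
    · rintro ⟨hsub, hne, hdvd⟩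
      exact ⟨fun x hx => Finset.mem_filter.mpr ⟨hsub hx, hdvd x hx⟩, hne⟩
    · rintro ⟨hsub, hne⟩
      exact ⟨fun x hx => (Finset.mem_filter.mp (hsub hx)).1, hne,
        fun x hx => (Finset.mem_filter.mp (hsub hx)).2⟩
  have hcard : ((Finset.Icc 1 n).filter (fun x => d ∣ x)).card = n / d := by
    rw [show Finset.Icc 1 n = Finset.Ioc 0 n from rfl]
    exact Nat.Ioc_filter_dvd_card_eq_div n d
  have hsplit := Finset.card_filter_add_card_filter_not
    (s := ((Finset.Icc 1 n).filter (fun x => d ∣ x)).powerset) (p := fun A => A.Nonempty)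
  have hneg : (((Finset.Icc 1 n).filter (fun x => d ∣ x)).powerset.filter
      (fun A => ¬ A.Nonempty)) = {∅} := by
    ext A
    simp only [Finset.mem_filter, Finset.mem_powerset, Finset.not_nonempty_iff_eq_empty,
      Finset.mem_singleton]
    constructor
    · exact fun h => h.2
    · rintro rfl; exact ⟨Finset.empty_subset _, rfl⟩
  rw [hset]
  have h2 : (((Finset.Icc 1 n).filter (fun x => d ∣ x)).powerset.filter
      (fun A => A.Nonempty)).card + 1 = 2 ^ (n / d) := by
    rw [← hcard, ← Finset.card_powerset]
    rw [hneg] at hsplit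
    simpa using hsplit
  have := congrArg (fun m : ℕ => (m : ℤ)) h2
  push_cast at this
  linarith

theorem f_eq (n : ℕ) (hn : 0 < n) :
    (f n : ℤ) = ∑ d ∈ Finset.Icc 1 n, (moebius d) * (2 ^ (n / d) - 1) := by
  have key : (f n : ℤ) = ∑ A ∈ (Finset.Icc 1 n).powerset,
      ∑ d ∈ Finset.Icc 1 n, if A.Nonempty ∧ d ∣ A.gcd _root_.id then moebius d else 0 := by
    rw [f, Finset.card_filter]
    push_cast
    refine Finset.sum_congr rfl fun A hA => ?_
    rw [Finset.mem_powerset] at hA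
    by_cases hne : A.Nonempty
    · obtain ⟨a, ha⟩ := id hne
      have hgpos : 0 < A.gcd _root_.id := by
        refine Nat.pos_of_ne_zero fun h => ?_
        rw [Finset.gcd_eq_zero_iff] at h
        have h1 := h a ha
        have h2 : 1 ≤ a := (Finset.mem_Icc.mp (hA ha)).1
        simp only [id_eq] at h1
        omega
      have hgle : A.gcd _root_.id ≤ n := by
        have h1 : A.gcd _root_.id ∣ _root_.id a := Finset.gcd_dvd ha
        have h2 : a ≤ n := (Finset.mem_Icc.mp (hA ha)).2
        have h0 : 1 ≤ a := (Finset.mem_Icc.mp (hA ha)).1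
        have h3 : A.gcd _root_.id ≤ a := Nat.le_of_dvd (show 0 < _root_.id a from h0) h1
        omega
      have hsum : (∑ d ∈ Finset.Icc 1 n,
          if A.Nonempty ∧ d ∣ A.gcd _root_.id then (moebius d : ℤ) else 0)
          = ∑ d ∈ (A.gcd _root_.id).divisors, moebius d := by
        rw [← Finset.sum_filter]
        apply Finset.sum_congr _ (fun _ _ => rfl)
        ext d
        simp only [Finset.mem_filter, Finset.mem_Icc, Nat.mem_divisors]
        constructor
        · rintro ⟨⟨h1, h2⟩, -, hd⟩
          exact ⟨hd, by omega⟩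
        · rintro ⟨hd, -⟩
          have h1 : 0 < d := Nat.pos_of_dvd_of_pos hd hgpos
          have h2 : d ≤ n := (Nat.le_of_dvd hgpos hd).trans hgle
          exact ⟨⟨h1, h2⟩, ⟨a, ha⟩, hd⟩
      rw [hsum, sum_moebius_eq_ite]
      simp [hne]
    · simp [hne]
  rw [key, Finset.sum_comm]
  refine Finset.sum_congr rfl fun d hd => ?_
  have h : (∑ A ∈ (Finset.Icc 1 n).powerset,
      if A.Nonempty ∧ d ∣ A.gcd _root_.id then (moebius d : ℤ) else 0)
      = moebius d * (((Finset.Icc 1 n).powerset.filter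
        (fun A => A.Nonempty ∧ d ∣ A.gcd _root_.id)).card : ℤ) := by
    rw [← Finset.sum_filter, Finset.sum_const, nsmul_eq_mul, mul_comm]
  rw [h, count_aux]
end

section
/- For every integer n > 1, \(\Phi(n) = \sum_{d \mid n} \mu(d)\, 2^{n/d}\), where \(\mu\) is the Möbius function. -/
open Finset ArithmeticFunction

/-- `Phi n` is the number of nonempty subsets `A` of `{1, 2, ..., n}` such that the gcd `(A)`
of the elements of `A` is relatively prime to `n`. -/
def Phi (n : ℕ) : ℕ :=
  ((Finset.Icc 1 n).powerset.filter
    (fun A => A.Nonempty ∧ Nat.gcd (A.gcd _root_.id) n = 1)).card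

/-!
Möbius sieve: the indicator of `gcd k n = 1` is `∑ μ d` over the common divisors `d` of `k`
and `n`. Summing over nonempty `A ⊆ {1, …, n}` with `k = gcd A` and exchanging the sums,
`Φ(n) = ∑_{d ∣ n} μ(d) N(d)`, where `N(d)` counts the nonempty `A` all of whose elements are
multiples of `d`, i.e. the nonempty subsets of a set of `n / d` elements: `N(d) = 2^(n/d) - 1`.
The `-1` terms contribute `∑_{d ∣ n} μ(d) = 0` since `n > 1`.
-/

theorem sum_divisors_moebius (m : ℕ) :
    ∑ d ∈ m.divisors, (moebius d : ℤ) = if m = 1 then 1 else 0 := by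
  simpa only [coe_mul_zeta_apply, one_apply] using
    congrArg (fun f : ArithmeticFunction ℤ => f m) moebius_mul_coe_zeta

theorem ite_coprime_eq_sum_moebius {n : ℕ} (hn : n ≠ 0) (k : ℕ) :
    (if Nat.gcd k n = 1 then 1 else 0 : ℤ) = ∑ d ∈ n.divisors with d ∣ k, (moebius d : ℤ) := by
  have hdiv : {d ∈ n.divisors | d ∣ k} = (Nat.gcd k n).divisors := by
    ext d
    simp [Nat.dvd_gcd_iff, hn, and_comm]
  rw [hdiv, sum_divisors_moebius]

theorem card_filter_coprime_eq_sum_moebius {ι : Type*} (S : Finset ι) (g : ι → ℕ) {n : ℕ}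
    (hn : n ≠ 0) :
    (#{i ∈ S | Nat.gcd (g i) n = 1} : ℤ) = ∑ d ∈ n.divisors, moebius d * #{i ∈ S | d ∣ g i} := by
  calc (#{i ∈ S | Nat.gcd (g i) n = 1} : ℤ)
      = ∑ i ∈ S, ∑ d ∈ n.divisors with d ∣ g i, (moebius d : ℤ) := by
        rw [← sum_boole]
        exact sum_congr rfl fun i _ => ite_coprime_eq_sum_moebius hn (g i)
    _ = ∑ d ∈ n.divisors, ∑ i ∈ S with d ∣ g i, (moebius d : ℤ) := by
        simp_rw [sum_filter]
        exact sum_comm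
    _ = ∑ d ∈ n.divisors, moebius d * #{i ∈ S | d ∣ g i} := by
        simp_rw [sum_const, nsmul_eq_mul, mul_comm]

theorem card_filter_nonempty_powerset {α : Type*} [DecidableEq α] (s : Finset α) :
    #{A ∈ s.powerset | A.Nonempty} = 2 ^ #s - 1 := by
  have herase : {A ∈ s.powerset | A.Nonempty} = s.powerset.erase ∅ := by
    ext A
    simp [nonempty_iff_ne_empty, and_comm]
  rw [herase, card_erase_of_mem (empty_mem_powerset s), card_powerset]

theorem filter_dvd_gcd_powerset (s : Finset ℕ) (d : ℕ) :
    {A ∈ s.powerset | A.Nonempty ∧ d ∣ A.gcd _root_.id} =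
      {A ∈ {a ∈ s | d ∣ a}.powerset | A.Nonempty} := by
  ext A
  simp only [mem_filter, mem_powerset, Finset.dvd_gcd_iff, _root_.id, subset_iff]
  grind

theorem card_filter_dvd_gcd_powerset_Icc (n d : ℕ) :
    #{A ∈ (Icc 1 n).powerset | A.Nonempty ∧ d ∣ A.gcd _root_.id} = 2 ^ (n / d) - 1 := by
  rw [filter_dvd_gcd_powerset, card_filter_nonempty_powerset]
  congr
  exact Nat.Ioc_filter_dvd_card_eq_div n d

theorem Phi_eq (n : ℕ) (hn : 1 < n) :
    (Phi n : ℤ) = ∑ d ∈ n.divisors, (moebius d) * 2 ^ (n / d) := by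
  have hPhi : Phi n =
      #{A ∈ {A ∈ (Icc 1 n).powerset | A.Nonempty} | Nat.gcd (A.gcd _root_.id) n = 1} := by
    rw [Phi, filter_filter]
  rw [hPhi, card_filter_coprime_eq_sum_moebius _ _ (by omega)]
  simp_rw [filter_filter, card_filter_dvd_gcd_powerset_Icc, Nat.cast_sub Nat.one_le_two_pow,
    Nat.cast_pow, Nat.cast_ofNat, Nat.cast_one, mul_sub, mul_one, sum_sub_distrib,
    sum_divisors_moebius, if_neg hn.ne', sub_zero]
end

section
/- For all positive integers n and k with k ≤ n, \(\Phi_k(n) = \sum_{d \mid n} \mu(d) \binom{n/d}{k}\), where \(\mu\) is the Möbius function. -/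
open Finset ArithmeticFunction

/-- `PhiK k n` is the number of `k`-element subsets `A` of `{1, 2, ..., n}` such that the gcd
`(A)` of the elements of `A` is relatively prime to `n`. -/
def PhiK (k n : ℕ) : ℕ :=
  ((Finset.Icc 1 n).powerset.filter
    (fun A => A.card = k ∧ Nat.gcd (A.gcd _root_.id) n = 1)).card

lemma sum_moebius_divisors (m : ℕ) :
    (∑ d ∈ m.divisors, (moebius d : ℤ)) = if m = 1 then 1 else 0 := by
  have := congrArg (fun f : ArithmeticFunction ℤ => f m) moebius_mul_coe_zeta
  simp only [mul_apply, one_apply] at this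
  rw [Nat.sum_divisorsAntidiagonal (f := fun x y => (moebius x) * ((zeta : ArithmeticFunction ℤ) y))] at this
  rw [← this]
  refine Finset.sum_congr rfl fun d hd => ?_
  rw [Nat.mem_divisors] at hd
  have hne : m / d ≠ 0 := by
    have := Nat.div_pos (Nat.le_of_dvd (Nat.pos_of_ne_zero hd.2) hd.1)
      (Nat.pos_of_dvd_of_pos hd.1 (Nat.pos_of_ne_zero hd.2))
    omega
  simp [natCoe_apply, zeta_apply, hne]

theorem PhiK_eq (n k : ℕ) (hn : 0 < n) (hk : 0 < k) (hkn : k ≤ n) :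
    (PhiK k n : ℤ) = ∑ d ∈ n.divisors, (moebius d) * ((n / d).choose k : ℤ) := by
  classical
  -- key counting lemma
  have key : ∀ d : ℕ,
      (((Icc 1 n).powerset.filter (fun A => A.card = k ∧ d ∣ A.gcd _root_.id)).card)
        = (n / d).choose k := by
    intro d
    have hset : ((Icc 1 n).powerset.filter (fun A => A.card = k ∧ d ∣ A.gcd _root_.id))
        = ((Icc 1 n).filter (fun x => d ∣ x)).powersetCard k := by
      ext A
      simp only [Finset.mem_filter, Finset.mem_powerset, Finset.mem_powersetCard,
        Finset.dvd_gcd_iff, Finset.subset_iff, _root_.id]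
      constructor
      · rintro ⟨hsub, hcard, hdvd⟩
        exact ⟨fun x hx => ⟨hsub hx, hdvd x hx⟩, hcard⟩
      · rintro ⟨h, hcard⟩
        exact ⟨fun x hx => (h hx).1, hcard, fun x hx => (h hx).2⟩
    rw [hset, Finset.card_powersetCard]
    congr 1
    have : Icc 1 n = Ioc 0 n := rfl
    rw [this]
    exact Nat.Ioc_filter_dvd_card_eq_div n d
  have h1 : (PhiK k n : ℤ)
      = ∑ A ∈ (Icc 1 n).powerset.filter (fun A => A.card = k),
          (if Nat.gcd (A.gcd _root_.id) n = 1 then (1 : ℤ) else 0) := by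
    rw [← Finset.sum_filter, Finset.filter_filter, Finset.sum_const, nsmul_eq_mul, mul_one]
    simp [PhiK]
  have h2 : ∀ A : Finset ℕ,
      (if Nat.gcd (A.gcd _root_.id) n = 1 then (1 : ℤ) else 0)
        = ∑ d ∈ n.divisors, (if d ∣ A.gcd _root_.id then (moebius d : ℤ) else 0) := by
    intro A
    rw [← Finset.sum_filter]
    have hfil : n.divisors.filter (fun d => d ∣ A.gcd _root_.id)
        = (Nat.gcd (A.gcd _root_.id) n).divisors := by
      ext d
      simp only [Finset.mem_filter, Nat.mem_divisors, Nat.dvd_gcd_iff]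
      constructor
      · rintro ⟨⟨hdn, hn0⟩, hdg⟩
        exact ⟨⟨hdg, hdn⟩, fun h => hn0 (Nat.eq_zero_of_gcd_eq_zero_right h)⟩
      · rintro ⟨⟨hdg, hdn⟩, _⟩
        exact ⟨⟨hdn, hn.ne'⟩, hdg⟩
    rw [hfil, sum_moebius_divisors]
  rw [h1]
  simp only [h2]
  rw [Finset.sum_comm]
  refine Finset.sum_congr rfl fun d hd => ?_
  rw [← Finset.sum_filter, Finset.filter_filter, Finset.sum_const, key d, nsmul_eq_mul,
    mul_comm]
end

section
/- For every positive integer n, \(\overline{M}(n) = \sum_{d \mid n} \varphi(d) \sum_{\substack{\delta \mid n\\ \gcd(\delta,d)=1}} \mu(\delta) \cdot \#\{A \subseteq \{1,\ldots,n\} : A \ne \emptyset,\ (A) \equiv 1 \ (\mathrm{mod}\ d),\ \delta \mid (A)\}\), where \(\varphi\) is Euler's totient function and \(\mu\) is the Möbius function. -/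
/-!
For `g = (A)` one has `(g - 1, n) = ∑_{d ∣ n, d ∣ g - 1} φ(d)` and
`[(g, n) = 1] = ∑_{δ ∣ n, δ ∣ g} μ(δ)`. Multiplying the two sums gives a double sum over
pairs `(d, δ)` with `d ∣ g - 1` and `δ ∣ g`; such `d` and `δ` are automatically coprime,
because `g` and `g - 1` are. Summing over `A` and exchanging the order of summation turns
the indicator of `g ≡ 1 (mod d) ∧ δ ∣ g` into the cardinality on the right-hand side.
-/

open Finset ArithmeticFunction

open scoped Nat ArithmeticFunction.Moebius

namespace Nat

theorem divisors_filter_dvd_eq_divisors_gcd {m n : ℕ} (hn : n ≠ 0) :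
    n.divisors.filter (· ∣ m) = (m.gcd n).divisors := by
  ext d
  simp only [mem_filter, mem_divisors, dvd_gcd_iff, ne_eq, hn, gcd_eq_zero_iff, and_false,
    not_false_eq_true, and_true]
  exact and_comm

theorem sum_totient_filter_dvd {m n : ℕ} (hn : n ≠ 0) :
    ∑ d ∈ n.divisors.filter (· ∣ m), φ d = m.gcd n := by
  rw [divisors_filter_dvd_eq_divisors_gcd hn, sum_totient]

theorem coprime_of_dvd_self_of_dvd_sub_one {g a b : ℕ} (hg : 0 < g) (ha : a ∣ g)
    (hb : b ∣ g - 1) : a.Coprime b :=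
  (((coprime_self_sub_right hg).2 (coprime_one_right g)).coprime_dvd_left ha).coprime_dvd_right hb

end Nat

namespace ArithmeticFunction

theorem sum_divisors_moebius (k : ℕ) :
    ∑ d ∈ k.divisors, (μ d : ℤ) = if k = 1 then 1 else 0 := by
  rw [← coe_mul_zeta_apply, moebius_mul_coe_zeta, one_apply]

theorem sum_divisors_filter_dvd_moebius {m n : ℕ} (hn : n ≠ 0) :
    ∑ d ∈ n.divisors.filter (· ∣ m), (μ d : ℤ) = if m.gcd n = 1 then 1 else 0 := by
  rw [Nat.divisors_filter_dvd_eq_divisors_gcd hn, sum_divisors_moebius]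

end ArithmeticFunction

theorem sum_coprime_divisors_moebius_mul_ite {g d n : ℕ} (hg : 0 < g) (hn : n ≠ 0) :
    ∑ δ ∈ n.divisors.filter (fun δ => δ.gcd d = 1),
        (μ δ : ℤ) * (if g % d = 1 % d ∧ δ ∣ g then 1 else 0) =
      if d ∣ g - 1 ∧ g.gcd n = 1 then 1 else 0 := by
  have hmod : g % d = 1 % d ↔ d ∣ g - 1 := eq_comm.trans (Nat.modEq_iff_dvd' hg)
  simp_rw [hmod]
  by_cases hd : d ∣ g - 1
  · simp only [hd, true_and]
    rw [← sum_divisors_filter_dvd_moebius hn, sum_filter, sum_filter]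
    refine sum_congr rfl fun δ _ => ?_
    have := fun hδ : δ ∣ g => Nat.coprime_of_dvd_self_of_dvd_sub_one hg hδ hd
    split_ifs <;> simp_all
  · simp [hd]

theorem ite_coprime_gcd_sub_one_eq_sum {g n : ℕ} (hg : 0 < g) (hn : n ≠ 0) :
    (if g.gcd n = 1 then ((g - 1).gcd n : ℤ) else 0) =
      ∑ d ∈ n.divisors, (φ d : ℤ) * ∑ δ ∈ n.divisors.filter (fun δ => δ.gcd d = 1),
        μ δ * if g % d = 1 % d ∧ δ ∣ g then 1 else 0 := by
  simp_rw [sum_coprime_divisors_moebius_mul_ite hg hn, mul_ite, mul_one, mul_zero, ← sum_filter]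
  split_ifs with h
  · simp [h, ← Nat.sum_totient_filter_dvd hn]
  · simp [h]

theorem Mbar_eq_card_form (n : ℕ) (hn : 0 < n) :
    (Mbar n : ℤ) = ∑ d ∈ n.divisors, (Nat.totient d : ℤ) *
      ∑ δ ∈ n.divisors.filter (fun δ => Nat.gcd δ d = 1), (moebius δ) *
        (((Finset.Icc 1 n).powerset.filter
            (fun A => A.Nonempty ∧ A.gcd _root_.id % d = 1 % d ∧
              δ ∣ A.gcd _root_.id)).card : ℤ) := by
  set S := (Icc 1 n).powerset.filter Finset.Nonempty
  have hgcd_pos : ∀ A ∈ S, 0 < A.gcd id := by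
    intro A hA
    obtain ⟨hsub, x, hx⟩ := mem_filter.1 hA
    exact Nat.pos_of_dvd_of_pos (Finset.gcd_dvd hx) (mem_Icc.1 (mem_powerset.1 hsub hx)).1
  have hMbar : (Mbar n : ℤ) = ∑ A ∈ S,
      if (A.gcd id).gcd n = 1 then ((A.gcd id - 1).gcd n : ℤ) else 0 := by
    rw [Mbar, ← filter_filter, Nat.cast_sum, sum_filter]
  have hcard : ∀ d δ : ℕ, (((Icc 1 n).powerset.filter
      (fun A => A.Nonempty ∧ A.gcd id % d = 1 % d ∧ δ ∣ A.gcd id)).card : ℤ) =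
        ∑ A ∈ S, if A.gcd id % d = 1 % d ∧ δ ∣ A.gcd id then 1 else 0 := by
    intro d δ
    rw [← filter_filter, card_filter, Nat.cast_sum]
    push_cast
    rfl
  rw [hMbar, sum_congr rfl fun A hA => ite_coprime_gcd_sub_one_eq_sum (hgcd_pos A hA) hn.ne',
    sum_comm]
  simp_rw [hcard, mul_sum]
  exact sum_congr rfl fun d _ => sum_comm
end
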